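/- arXiv:2009.12962 — 3 statements merged into one kernel-verified Lean document; each statement's English description precedes it below -/
import Mathlib

section
/- Let N ≥ 2, r ∈ (0,1), and let Ω ⊂ ℝ^N be an open set satisfying the measure density condition: there exists C_Ω > 0 such that |Ω ∩ B_ρ(x)| ≥ C_Ω ρ^N for all x ∈ Ω and all ρ > 0. Then there exists a constant C = C(Ω, r, N) > 0 such that for every f ∈ L¹(Ω) ∩ L²(Ω) with finite Gagliardo seminorm [f]_{r,Ω}, one has ‖f‖_{L²(Ω)} ≤ C ‖f‖_{L¹(Ω)}^{2r/(N+2r)} [f]_{r,Ω}^{N/(N+2r)}. -/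
/-!
For `x ∈ Ω` and `y ∈ Ω ∩ B_ρ(x)` one has `f(x)² ≤ (f(x) - f(y))² + 2 |f(x)| |f(y)|`. Integrating in
`y` over `Ω ∩ B_ρ(x)`, using the density bound `|Ω ∩ B_ρ(x)| ≥ C_Ω ρ^N`, and then in `x` over `Ω`
gives, since `|x - y| < ρ` on the ball,
`C_Ω ρ^N ‖f‖₂² ≤ ρ^(N+2r) [f]² + 2 ‖f‖₁²` for every `ρ > 0`.
The choice `ρ^(N+2r) = ‖f‖₁² / [f]²` gives the inequality with `C = √(3 / C_Ω)`; if `‖f‖₁ = 0` or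
`[f] = 0`, letting `ρ → 0` or `ρ → ∞` shows `‖f‖₂ = 0`.
-/

open MeasureTheory ENNReal

/-- The squared Gagliardo seminorm `[f]_{s,Ω}²` on an open set `Ω ⊆ ℝ^N`. -/
noncomputable def gagliardoSq {N : ℕ} (s : ℝ) (Ω : Set (EuclideanSpace ℝ (Fin N)))
    (f : EuclideanSpace ℝ (Fin N) → ℝ) : ℝ≥0∞ :=
  ∫⁻ x in Ω, ∫⁻ y in Ω, ENNReal.ofReal ((f x - f y) ^ 2 / ‖x - y‖ ^ ((N : ℝ) + 2 * s))

open Metric Filter Topology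

theorem enorm_sq_le_ofReal_sub_sq_add (a b : ℝ) :
    ‖a‖ₑ ^ 2 ≤ ENNReal.ofReal ((a - b) ^ 2) + 2 * ‖a‖ₑ * ‖b‖ₑ := by
  simp only [Real.enorm_eq_ofReal_abs]
  rw [← ENNReal.ofReal_pow (abs_nonneg a), ← ENNReal.ofReal_ofNat 2,
    ← ENNReal.ofReal_mul zero_le_two, ← ENNReal.ofReal_mul (by positivity),
    ← ENNReal.ofReal_add (sq_nonneg _) (by positivity)]
  refine ENNReal.ofReal_le_ofReal ?_
  nlinarith [sq_abs a, le_abs_self (a * b), abs_mul a b, sq_nonneg b]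

theorem eLpNorm_two_sq {α : Type*} [MeasurableSpace α] (μ : Measure α) (f : α → ℝ) :
    eLpNorm f 2 μ ^ 2 = ∫⁻ x, ‖f x‖ₑ ^ 2 ∂μ := by
  simpa using eLpNorm_nnreal_pow_eq_lintegral (μ := μ) (f := f) (p := 2) two_ne_zero

section LocalEnergy

variable {α : Type*} [PseudoMetricSpace α] [MeasurableSpace α] {μ : Measure α} {f : α → ℝ}

theorem measure_ball_mul_enorm_sq_le (hf : AEMeasurable f μ) (x : α) (ρ : ℝ) :
    μ (ball x ρ) * ‖f x‖ₑ ^ 2 ≤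
      ∫⁻ y in ball x ρ, ENNReal.ofReal ((f x - f y) ^ 2) ∂μ + 2 * ‖f x‖ₑ * eLpNorm f 1 μ := by
  calc μ (ball x ρ) * ‖f x‖ₑ ^ 2 = ∫⁻ _ in ball x ρ, ‖f x‖ₑ ^ 2 ∂μ := by
        rw [setLIntegral_const, mul_comm]
    _ ≤ ∫⁻ y in ball x ρ, (ENNReal.ofReal ((f x - f y) ^ 2) + 2 * ‖f x‖ₑ * ‖f y‖ₑ) ∂μ :=
        lintegral_mono fun y => enorm_sq_le_ofReal_sub_sq_add (f x) (f y)
    _ = ∫⁻ y in ball x ρ, ENNReal.ofReal ((f x - f y) ^ 2) ∂μ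
          + 2 * ‖f x‖ₑ * ∫⁻ y in ball x ρ, ‖f y‖ₑ ∂μ := by
        rw [lintegral_add_right' _ (hf.restrict.enorm.const_mul _),
          lintegral_const_mul' _ _ (by finiteness)]
    _ ≤ _ := by
        rw [eLpNorm_one_eq_lintegral_enorm]
        gcongr
        exact Measure.restrict_le_self

theorem mul_eLpNorm_two_sq_le_of_le_measure_ball {m : ℝ≥0∞} {ρ : ℝ} (hf : AEMeasurable f μ)
    (hm : ∀ᵐ x ∂μ, m ≤ μ (ball x ρ)) :
    m * eLpNorm f 2 μ ^ 2 ≤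
      ∫⁻ x, ∫⁻ y in ball x ρ, ENNReal.ofReal ((f x - f y) ^ 2) ∂μ ∂μ + 2 * eLpNorm f 1 μ ^ 2 := by
  calc m * eLpNorm f 2 μ ^ 2 = ∫⁻ x, m * ‖f x‖ₑ ^ 2 ∂μ := by
        rw [eLpNorm_two_sq, lintegral_const_mul'' _ (hf.enorm.pow_const 2)]
    _ ≤ ∫⁻ x, (∫⁻ y in ball x ρ, ENNReal.ofReal ((f x - f y) ^ 2) ∂μ
          + 2 * eLpNorm f 1 μ * ‖f x‖ₑ) ∂μ := by
        refine lintegral_mono_ae (hm.mono fun x hx => ?_)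
        calc m * ‖f x‖ₑ ^ 2 ≤ μ (ball x ρ) * ‖f x‖ₑ ^ 2 := by gcongr
          _ ≤ _ := (measure_ball_mul_enorm_sq_le hf x ρ).trans_eq (by ring)
    _ = _ := by
        rw [lintegral_add_right' _ (hf.enorm.const_mul _), lintegral_const_mul'' _ hf.enorm,
          ← eLpNorm_one_eq_lintegral_enorm]
        ring

end LocalEnergy

theorem lintegral_lintegral_ball_sq_sub_le {E : Type*} [NormedAddCommGroup E] [MeasurableSpace E]
    [OpensMeasurableSpace E] (μ : Measure E) (f : E → ℝ) {ρ p : ℝ} (hp : 0 ≤ p) :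
    ∫⁻ x, ∫⁻ y in ball x ρ, ENNReal.ofReal ((f x - f y) ^ 2) ∂μ ∂μ ≤
      ENNReal.ofReal (ρ ^ p) *
        ∫⁻ x, ∫⁻ y, ENNReal.ofReal ((f x - f y) ^ 2 / ‖x - y‖ ^ p) ∂μ ∂μ := by
  have pointwise : ∀ x y : E, y ∈ ball x ρ →
      (f x - f y) ^ 2 ≤ ρ ^ p * ((f x - f y) ^ 2 / ‖x - y‖ ^ p) := by
    intro x y hy
    rcases eq_or_ne x y with rfl | hxy
    · simp
    have hd : 0 < ‖x - y‖ := norm_pos_iff.mpr (sub_ne_zero.mpr hxy)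
    have hdρ : ‖x - y‖ < ρ := by rwa [mem_ball, dist_eq_norm, norm_sub_rev] at hy
    calc (f x - f y) ^ 2 = ‖x - y‖ ^ p * ((f x - f y) ^ 2 / ‖x - y‖ ^ p) :=
          (mul_div_cancel₀ _ (Real.rpow_pos_of_pos hd p).ne').symm
      _ ≤ ρ ^ p * ((f x - f y) ^ 2 / ‖x - y‖ ^ p) := by gcongr
  rw [← lintegral_const_mul' _ _ ofReal_ne_top]
  refine lintegral_mono fun x => ?_
  rw [← lintegral_const_mul' _ _ ofReal_ne_top]
  calc ∫⁻ y in ball x ρ, ENNReal.ofReal ((f x - f y) ^ 2) ∂μ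
      ≤ ∫⁻ y in ball x ρ, ENNReal.ofReal (ρ ^ p) *
          ENNReal.ofReal ((f x - f y) ^ 2 / ‖x - y‖ ^ p) ∂μ := by
        refine setLIntegral_mono' measurableSet_ball fun y hy => ?_
        rw [← ENNReal.ofReal_mul' (by positivity)]
        exact ENNReal.ofReal_le_ofReal (pointwise x y hy)
    _ ≤ _ := lintegral_mono' Measure.restrict_le_self le_rfl

theorem eq_zero_of_eventually_le_ofReal_mul {Y K : ℝ≥0∞} {φ : ℝ → ℝ} {l : Filter ℝ} [l.NeBot]
    (hK : K ≠ ⊤) (hφ : Tendsto φ l (𝓝 0)) (h : ∀ᶠ ρ in l, Y ≤ ENNReal.ofReal (φ ρ) * K) :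
    Y = 0 := by
  have hlim : Tendsto (fun ρ => ENNReal.ofReal (φ ρ) * K) l (𝓝 0) := by
    simpa using ENNReal.Tendsto.mul_const (ENNReal.tendsto_ofReal hφ) (Or.inr hK)
  exact le_zero_iff.mp (ge_of_tendsto hlim h)

theorem le_ofReal_of_forall_radius {X : ℝ≥0∞} {a g c d r : ℝ} (ha : 0 < a) (hg : 0 < g)
    (hc : 0 < c) (hp : d + 2 * r ≠ 0)
    (h : ∀ ρ : ℝ, 0 < ρ → ENNReal.ofReal (c * ρ ^ d) * X ^ 2 ≤
      ENNReal.ofReal (ρ ^ (d + 2 * r)) * ENNReal.ofReal g + 2 * ENNReal.ofReal a ^ 2) :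
    X ≤ ENNReal.ofReal (√(3 / c) * a ^ (2 * r / (d + 2 * r)) * g ^ (d / (2 * (d + 2 * r)))) := by
  set p := d + 2 * r
  set ρ := (a ^ 2 / g) ^ p⁻¹
  set V := √(3 / c) * a ^ (2 * r / p) * g ^ (d / (2 * p)) with hV_def
  have hρ : 0 < ρ := by positivity
  have hρp : ρ ^ p = a ^ 2 / g := by
    rw [← Real.rpow_mul (by positivity), inv_mul_cancel₀ hp, Real.rpow_one]
  have hρd : ρ ^ d = a ^ (2 * d / p) / g ^ (d / p) := by
    rw [← Real.rpow_mul (by positivity), Real.div_rpow (by positivity) hg.le,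
      ← Real.rpow_natCast a 2, ← Real.rpow_mul ha.le]
    ring_nf
  have hV2 : V ^ 2 = 3 / c * a ^ (4 * r / p) * g ^ (d / p) := by
    rw [hV_def, mul_pow, mul_pow, Real.sq_sqrt (by positivity), ← Real.rpow_natCast,
      ← Real.rpow_mul ha.le, ← Real.rpow_natCast, ← Real.rpow_mul hg.le]
    field_simp
    ring_nf
  have hbalance : c * ρ ^ d * V ^ 2 = 3 * a ^ 2 := by
    rw [hρd, hV2]
    field_simp
    rw [← Real.rpow_add ha, ← Real.rpow_natCast a 2]
    congr 1
    field_simp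
    push_cast
    ring
  have hX : ENNReal.ofReal (c * ρ ^ d) * X ^ 2 ≤
      ENNReal.ofReal (c * ρ ^ d) * ENNReal.ofReal V ^ 2 :=
    calc ENNReal.ofReal (c * ρ ^ d) * X ^ 2
        ≤ ENNReal.ofReal (ρ ^ p) * ENNReal.ofReal g + 2 * ENNReal.ofReal a ^ 2 := h ρ hρ
      _ = ENNReal.ofReal (3 * a ^ 2) := by
        rw [← ENNReal.ofReal_mul (by positivity), hρp, div_mul_cancel₀ _ hg.ne',
          ← ENNReal.ofReal_pow ha.le, ← ENNReal.ofReal_ofNat 2, ← ENNReal.ofReal_mul zero_le_two,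
          ← ENNReal.ofReal_add (by positivity) (by positivity)]
        ring_nf
      _ = ENNReal.ofReal (c * ρ ^ d) * ENNReal.ofReal V ^ 2 := by
        rw [← hbalance, ENNReal.ofReal_mul (by positivity), ENNReal.ofReal_pow (by positivity)]
  have hcρ : ENNReal.ofReal (c * ρ ^ d) ≠ 0 := (ENNReal.ofReal_pos.mpr (by positivity)).ne'
  exact (ENNReal.pow_le_pow_left_iff two_ne_zero).mp
    ((ENNReal.mul_le_mul_iff_right hcρ ofReal_ne_top).mp hX)

theorem le_of_forall_radius {X A G : ℝ≥0∞} {c d r : ℝ} (hc : 0 < c) (hd : 0 < d)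
    (hr : 0 < r) (hA : A ≠ ⊤) (hG : G ≠ ⊤)
    (h : ∀ ρ : ℝ, 0 < ρ → ENNReal.ofReal (c * ρ ^ d) * X ^ 2 ≤
      ENNReal.ofReal (ρ ^ (d + 2 * r)) * G + 2 * A ^ 2) :
    X ≤ ENNReal.ofReal √(3 / c) * A ^ (2 * r / (d + 2 * r)) * G ^ (d / (2 * (d + 2 * r))) := by
  rcases eq_or_ne A 0 with rfl | hA0
  · suffices ENNReal.ofReal c * X ^ 2 = 0 by
      simp_all [hc.not_ge, ENNReal.zero_rpow_of_pos (show 0 < 2 * r / (d + 2 * r) by positivity)]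
    refine eq_zero_of_eventually_le_ofReal_mul hG (l := 𝓝[>] 0) (φ := fun ρ => ρ ^ (2 * r)) ?_ ?_
    · simpa [Real.zero_rpow (by positivity : 2 * r ≠ 0)] using
        ((Real.continuousAt_rpow_const 0 (2 * r) (Or.inr (by positivity))).tendsto).mono_left
          nhdsWithin_le_nhds
    filter_upwards [self_mem_nhdsWithin] with ρ (hρ : 0 < ρ)
    -- cancel `ρ ^ d` from both sides, using `ρ ^ (d + 2 * r) = ρ ^ d * ρ ^ (2 * r)`
    have hρd : ENNReal.ofReal (ρ ^ d) ≠ 0 := (ENNReal.ofReal_pos.mpr (by positivity)).ne'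
    refine (ENNReal.mul_le_mul_iff_right hρd ofReal_ne_top).mp ?_
    simpa [Real.rpow_add hρ, ENNReal.ofReal_mul, hc.le, mul_comm, mul_left_comm, mul_assoc,
      Real.rpow_nonneg hρ.le] using h ρ hρ
  rcases eq_or_ne G 0 with rfl | hG0
  · suffices X ^ 2 = 0 by
      simp_all [ENNReal.zero_rpow_of_pos (show 0 < d / (2 * (d + 2 * r)) by positivity)]
    refine eq_zero_of_eventually_le_ofReal_mul (K := 2 * A ^ 2) (by finiteness) (l := atTop)
      (φ := fun ρ => (c * ρ ^ d)⁻¹) ?_ ?_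
    · exact tendsto_inv_atTop_zero.comp ((tendsto_rpow_atTop hd).const_mul_atTop hc)
    filter_upwards [eventually_gt_atTop 0] with ρ hρ
    rw [ENNReal.ofReal_inv_of_pos (by positivity), ← ENNReal.div_eq_inv_mul,
      ENNReal.le_div_iff_mul_le (Or.inl (ENNReal.ofReal_pos.mpr (by positivity)).ne')
        (Or.inl ofReal_ne_top), mul_comm]
    simpa using h ρ hρ
  obtain ⟨a, ha, rfl⟩ : ∃ a, 0 < a ∧ A = ENNReal.ofReal a :=
    ⟨A.toReal, ENNReal.toReal_pos hA0 hA, (ENNReal.ofReal_toReal hA).symm⟩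
  obtain ⟨g, hg, rfl⟩ : ∃ g, 0 < g ∧ G = ENNReal.ofReal g :=
    ⟨G.toReal, ENNReal.toReal_pos hG0 hG, (ENNReal.ofReal_toReal hG).symm⟩
  rw [ENNReal.ofReal_rpow_of_pos ha, ENNReal.ofReal_rpow_of_pos hg,
    ← ENNReal.ofReal_mul (by positivity), ← ENNReal.ofReal_mul (by positivity)]
  exact le_ofReal_of_forall_radius ha hg hc (by positivity) h

/-- Fractional Nash inequality for domains satisfying the measure density condition, `N ≥ 2`. -/
theorem nash_exterior_domain (N : ℕ) (hN : 2 ≤ N) (r : ℝ) (hr : r ∈ Set.Ioo (0 : ℝ) 1)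
    (Ω : Set (EuclideanSpace ℝ (Fin N))) (hΩopen : IsOpen Ω)
    (CΩ : ℝ) (hCΩ : 0 < CΩ)
    (hdensity : ∀ x ∈ Ω, ∀ ρ : ℝ, 0 < ρ →
      ENNReal.ofReal (CΩ * ρ ^ N) ≤ volume (Ω ∩ Metric.ball x ρ)) :
    ∃ C : ℝ, 0 < C ∧ ∀ f : EuclideanSpace ℝ (Fin N) → ℝ,
      MemLp f 1 (volume.restrict Ω) → MemLp f 2 (volume.restrict Ω) →
      gagliardoSq r Ω f ≠ ⊤ →
      eLpNorm f 2 (volume.restrict Ω) ≤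
        ENNReal.ofReal C * eLpNorm f 1 (volume.restrict Ω) ^ (2 * r / ((N : ℝ) + 2 * r)) *
          gagliardoSq r Ω f ^ ((N : ℝ) / (2 * ((N : ℝ) + 2 * r))) := by
  obtain ⟨hr₀, -⟩ := hr
  have hN₀ : (0 : ℝ) < N := Nat.cast_pos.mpr (by omega)
  refine ⟨√(3 / CΩ), by positivity, fun f hf1 _ hG => ?_⟩
  refine le_of_forall_radius hCΩ hN₀ hr₀ hf1.eLpNorm_ne_top hG fun ρ hρ => ?_
  have hball : ∀ᵐ x ∂volume.restrict Ω,
      ENNReal.ofReal (CΩ * ρ ^ (N : ℝ)) ≤ volume.restrict Ω (ball x ρ) := by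
    filter_upwards [ae_restrict_mem hΩopen.measurableSet] with x hx
    rw [Real.rpow_natCast, Measure.restrict_apply measurableSet_ball, Set.inter_comm]
    exact hdensity x hx ρ hρ
  calc _ ≤ _ :=
        mul_eLpNorm_two_sq_le_of_le_measure_ball hf1.aestronglyMeasurable.aemeasurable hball
    _ ≤ _ := by
      gcongr
      exact lintegral_lintegral_ball_sq_sub_le _ _ (by positivity)
end

section
/- Let Ω ⊂ ℝ^N be an open set satisfying the measure density condition: there exists C_Ω > 0 such that |Ω ∩ B_ρ(x)| ≥ C_Ω ρ^N for all x ∈ Ω and all ρ > 0. Let s ∈ (0,1) with 2s < N and set 2* = 2N/(N − 2s). Then there exists C = C(Ω, N, s) > 0 such that for every f ∈ L²(Ω) with finite Gagliardo seminorm [f]_{s,Ω}, one has ‖f‖_{L^{2*}(Ω)} ≤ C [f]_{s,Ω}. -/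
/-!
Fix `x ∈ Ω`, `r > 0` and average `|f x| ≤ |f x - f y| + |f y|` over `Ω ∩ B_r(x)`, a set of
measure at least `C r ^ N`. Cauchy–Schwarz bounds the first average by
`C ^ (-1/2) r ^ s G(x) ^ (1/2)`, where `G(x) = ∫_Ω (f x - f y)² / |x - y| ^ (N + 2s) dy`, and
Hölder bounds the second by `C ^ (-1/p) r ^ (-N/p) ‖f‖_p`. For `p = 2N / (N - 2s)`, optimising
in `r` gives `|f x| ^ p ≤ K ^ p ‖f‖_p ^ (p - 2) G(x)` with `K = C ^ (-1/2) + C ^ (-1/p)`;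
integrating over `Ω` and cancelling `‖f‖_p ^ (p - 2)` yields `‖f‖_p ≤ K ^ (p/2) [f]`.
The cancellation needs `‖f‖_p < ∞`, so the inequality is first proved for the truncations
`min |f| k ∈ L² ∩ L^∞`, whose seminorms are at most `[f]`, and then passed to the limit by
Fatou's lemma.
-/

open MeasureTheory ENNReal

open Filter Topology

lemma ENNReal.eq_zero_of_forall_le_mul_rpow_neg {X c : ℝ≥0∞} {b : ℝ} (hb : 0 < b) (hc : c ≠ ⊤)
    (h : ∀ t : ℝ≥0∞, t ≠ 0 → t ≠ ⊤ → X ≤ c * t ^ (-b)) : X = 0 := by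
  have hlim : Tendsto (fun n : ℕ => c * (n : ℝ≥0∞) ^ (-b)) atTop (𝓝 0) := by
    have := ((ENNReal.continuous_rpow_const (y := -b)).tendsto ⊤).comp tendsto_nat_nhds_top
    simpa [ENNReal.top_rpow_of_neg (neg_neg_of_pos hb)] using
      ENNReal.Tendsto.const_mul this (Or.inr hc)
  refine le_antisymm (ge_of_tendsto hlim ?_) bot_le
  filter_upwards [eventually_ge_atTop 1] with n hn
  exact h n (by exact_mod_cast (by omega : n ≠ 0)) (natCast_ne_top n)

lemma ENNReal.rpow_div_rpow_mul_self {A G : ℝ≥0∞} (hG : G ≠ 0) (hG' : G ≠ ⊤) (z : ℝ) :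
    A ^ z / G ^ z * G = A ^ z * G ^ (1 - z) := by
  rw [ENNReal.rpow_sub _ _ hG hG', ENNReal.rpow_one, div_eq_mul_inv, div_eq_mul_inv]
  ring

/-- The choice `t ^ (a + b) = A / G` balances the two terms. -/
lemma ENNReal.le_mul_rpow_mul_rpow_of_forall_le_add {X c₁ c₂ A G : ℝ≥0∞} {a b : ℝ}
    (ha : 0 < a) (hb : 0 < b) (hc₂ : c₂ ≠ ⊤) (hA : A ≠ 0) (hA' : A ≠ ⊤) (hG' : G ≠ ⊤)
    (h : ∀ t : ℝ≥0∞, t ≠ 0 → t ≠ ⊤ → X ≤ c₁ * t ^ a * G + c₂ * t ^ (-b) * A) :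
    X ≤ (c₁ + c₂) * (A ^ (a / (a + b)) * G ^ (b / (a + b))) := by
  rcases eq_or_ne G 0 with rfl | hG
  · rw [ENNReal.zero_rpow_of_pos (by positivity), mul_zero, mul_zero]
    refine (ENNReal.eq_zero_of_forall_le_mul_rpow_neg hb (mul_ne_top hc₂ hA') fun t ht ht' => ?_).le
    simpa [mul_right_comm c₂] using h t ht ht'
  have hβ : b / (a + b) = 1 - a / (a + b) := by field_simp; ring
  have hα : a / (a + b) = 1 - b / (a + b) := by field_simp; ring
  have hAG : A / G ≠ 0 := ENNReal.div_ne_zero.2 ⟨hA, hG'⟩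
  have hAG' : A / G ≠ ⊤ := ENNReal.div_ne_top hA' hG
  set t := (A / G) ^ (1 / (a + b))
  have h₁ : t ^ a * G = A ^ (a / (a + b)) * G ^ (b / (a + b)) := by
    rw [← ENNReal.rpow_mul, ENNReal.div_rpow_of_nonneg _ _ (by positivity), hβ,
      ENNReal.rpow_div_rpow_mul_self hG hG']
    ring_nf
  have h₂ : t ^ (-b) * A = A ^ (a / (a + b)) * G ^ (b / (a + b)) := by
    rw [← ENNReal.rpow_mul, show 1 / (a + b) * -b = -(b / (a + b)) by ring,
      ENNReal.rpow_neg, ← ENNReal.inv_rpow, ENNReal.inv_div (Or.inl hG') (Or.inl hG),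
      ENNReal.div_rpow_of_nonneg _ _ (by positivity), ENNReal.rpow_div_rpow_mul_self hA hA',
      ← hα, mul_comm]
  calc X ≤ c₁ * t ^ a * G + c₂ * t ^ (-b) * A :=
        h t (ENNReal.rpow_pos (pos_iff_ne_zero.2 hAG) hAG').ne'
          (ENNReal.rpow_ne_top_of_ne_zero hAG hAG')
    _ = _ := by rw [mul_assoc, mul_assoc, h₁, h₂, add_mul]

lemma ENNReal.rpow_neg_le_rpow_neg {x y : ℝ≥0∞} {c : ℝ} (hc : 0 ≤ c) (h : x ≤ y) :
    y ^ (-c) ≤ x ^ (-c) := by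
  rw [ENNReal.rpow_neg, ENNReal.rpow_neg]
  exact ENNReal.inv_le_inv.2 (ENNReal.rpow_le_rpow h hc)

lemma ENNReal.rpow_mul_inv {m : ℝ≥0∞} (hm : m ≠ 0) (hm' : m ≠ ⊤) (u : ℝ) :
    m ^ u * m⁻¹ = m ^ (u - 1) := by
  rw [ENNReal.rpow_sub _ _ hm hm', ENNReal.rpow_one, div_eq_mul_inv]

lemma ENNReal.min_rpow_le {a k : ℝ≥0∞} {p q : ℝ} (hq : 0 ≤ q) (hqp : q ≤ p) :
    min a k ^ p ≤ k ^ (p - q) * a ^ q := by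
  calc min a k ^ p = min a k ^ (p - q) * min a k ^ q := by
        rw [← ENNReal.rpow_add_of_nonneg _ _ (by linarith) hq, sub_add_cancel]
    _ ≤ k ^ (p - q) * a ^ q := by gcongr <;> simp

lemma abs_min_abs_sub_min_abs_le (a b k : ℝ) : |min |a| k - min |b| k| ≤ |a - b| :=
  (abs_min_sub_min_le_max _ _ _ _).trans (by simpa using abs_abs_sub_abs_le_abs_sub a b)

lemma enorm_min_abs {a k : ℝ} (hk : 0 ≤ k) : ‖min |a| k‖ₑ = min ‖a‖ₑ (ENNReal.ofReal k) := by
  rw [Real.enorm_eq_ofReal_abs, abs_of_nonneg (le_min (abs_nonneg a) hk), ENNReal.ofReal_min,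
    Real.enorm_eq_ofReal_abs]

lemma setLIntegral_le_rpow_mul_measure_rpow {α : Type*} [MeasurableSpace α] {μ : Measure α}
    {S : Set α} {h : α → ℝ≥0∞} (hh : AEMeasurable h (μ.restrict S)) {q : ℝ} (hq : 1 ≤ q) :
    ∫⁻ y in S, h y ∂μ ≤ (∫⁻ y in S, h y ^ q ∂μ) ^ (1 / q) * μ S ^ (1 - 1 / q) := by
  have := eLpNorm'_le_eLpNorm'_mul_rpow_measure_univ one_pos hq hh.aestronglyMeasurable
  simpa [eLpNorm'_eq_lintegral_enorm] using this

lemma enorm_mul_measure_le_setLIntegral {α F : Type*} [MeasurableSpace α] [NormedAddCommGroup F]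
    {μ : Measure α} {S : Set α} {f : α → F} (hf : AEStronglyMeasurable f (μ.restrict S)) (x : α) :
    ‖f x‖ₑ * μ S ≤ ∫⁻ y in S, ‖f x - f y‖ₑ ∂μ + ∫⁻ y in S, ‖f y‖ₑ ∂μ := by
  rw [← lintegral_add_right' _ hf.enorm, ← setLIntegral_const]
  exact lintegral_mono fun y => by simpa using enorm_add_le (f x - f y) (f y)

lemma eLpNorm'_min_abs_ne_top {α : Type*} [MeasurableSpace α] {μ : Measure α} {f : α → ℝ}
    (hf : MemLp f 2 μ) {k : ℝ} (hk : 0 ≤ k) {p : ℝ} (hp : 2 ≤ p) :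
    eLpNorm' (fun x => min |f x| k) p μ ≠ ⊤ := by
  have hpt : ∀ x, ‖min |f x| k‖ₑ ^ p ≤ ENNReal.ofReal k ^ (p - 2) * ‖f x‖ₑ ^ (2 : ℝ) := fun x => by
    rw [enorm_min_abs hk]
    exact ENNReal.min_rpow_le zero_le_two hp
  have hf2 : ∫⁻ x, ‖f x‖ₑ ^ (2 : ℝ) ∂μ ≠ ⊤ :=
    (lintegral_rpow_enorm_lt_top_of_eLpNorm_lt_top two_ne_zero ofNat_ne_top hf.eLpNorm_lt_top).ne
  refine ENNReal.rpow_ne_top_of_nonneg (by positivity) (ne_top_of_le_ne_top ?_ (lintegral_mono hpt))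
  rw [lintegral_const_mul' _ _ (ENNReal.rpow_ne_top_of_nonneg (by linarith) ofReal_ne_top)]
  exact mul_ne_top (ENNReal.rpow_ne_top_of_nonneg (by linarith) ofReal_ne_top) hf2

variable {E : Type*} [NormedAddCommGroup E]

noncomputable def gagliardoKernel (d s : ℝ) (f : E → ℝ) (x y : E) : ℝ≥0∞ :=
  ENNReal.ofReal ((f x - f y) ^ 2 / ‖x - y‖ ^ (d + 2 * s))

lemma gagliardoSq_eq_lintegral_gagliardoKernel {N : ℕ} (s : ℝ)
    (Ω : Set (EuclideanSpace ℝ (Fin N))) (f : EuclideanSpace ℝ (Fin N) → ℝ) :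
    gagliardoSq s Ω f = ∫⁻ x in Ω, ∫⁻ y in Ω, gagliardoKernel N s f x y :=
  rfl

variable {f : E → ℝ} {d s : ℝ}

lemma enorm_sub_rpow_two_le_gagliardoKernel_mul {x y : E} {r : ℝ} (hxy : ‖x - y‖ ≤ r)
    (hds : 0 ≤ d + 2 * s) :
    ‖f x - f y‖ₑ ^ (2 : ℝ) ≤ gagliardoKernel d s f x y * ENNReal.ofReal r ^ (d + 2 * s) := by
  rw [gagliardoKernel, ENNReal.ofReal_rpow_of_nonneg ((norm_nonneg _).trans hxy) hds,
    ← ENNReal.ofReal_mul (by positivity), Real.enorm_eq_ofReal_abs,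
    ENNReal.ofReal_rpow_of_nonneg (abs_nonneg _) zero_le_two, Real.rpow_two, sq_abs]
  refine ENNReal.ofReal_le_ofReal ?_
  rcases (norm_nonneg (x - y)).eq_or_lt with hρ | hρ
  · obtain rfl : x = y := sub_eq_zero.1 (norm_eq_zero.1 hρ.symm)
    simp
  rw [div_mul_eq_mul_div, le_div_iff₀ (by positivity)]
  exact mul_le_mul_of_nonneg_left (Real.rpow_le_rpow hρ.le hxy hds) (sq_nonneg _)

lemma gagliardoKernel_le_of_abs_sub_le {g : E → ℝ} (h : ∀ x y, |g x - g y| ≤ |f x - f y|)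
    (x y : E) : gagliardoKernel d s g x y ≤ gagliardoKernel d s f x y :=
  ENNReal.ofReal_le_ofReal (div_le_div_of_nonneg_right (sq_le_sq.2 (h x y)) (by positivity))

variable [MeasurableSpace E] {μ : Measure E} {Ω : Set E} {C p : ℝ}

def MeasureDensityCondition (μ : Measure E) (Ω : Set E) (C d : ℝ) : Prop :=
  ∀ x ∈ Ω, ∀ ρ : ℝ, 0 < ρ → ENNReal.ofReal (C * ρ ^ d) ≤ μ (Ω ∩ Metric.ball x ρ)

namespace MeasureDensityCondition

lemma measure_inter_ball_ne_zero (hdens : MeasureDensityCondition μ Ω C d) (hC : 0 < C)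
    {x : E} (hx : x ∈ Ω) {r : ℝ} (hr : 0 < r) : μ (Ω ∩ Metric.ball x r) ≠ 0 :=
  (lt_of_lt_of_le (by simp only [ENNReal.ofReal_pos]; positivity) (hdens x hx r hr)).ne'

lemma measure_inter_ball_rpow_neg_le (hdens : MeasureDensityCondition μ Ω C d) (hC : 0 < C)
    (hd : 0 ≤ d) {x : E} (hx : x ∈ Ω) {r : ℝ} (hr : 0 < r) {c : ℝ} (hc : 0 ≤ c) :
    μ (Ω ∩ Metric.ball x r) ^ (-c) ≤ ENNReal.ofReal (C ^ (-c)) * ENNReal.ofReal r ^ (-(d * c)) := by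
  have hlb : ENNReal.ofReal C * ENNReal.ofReal r ^ d ≤ μ (Ω ∩ Metric.ball x r) := by
    simpa [ENNReal.ofReal_mul hC.le, ENNReal.ofReal_rpow_of_pos hr] using hdens x hx r hr
  calc μ (Ω ∩ Metric.ball x r) ^ (-c) ≤ (ENNReal.ofReal C * ENNReal.ofReal r ^ d) ^ (-c) :=
        ENNReal.rpow_neg_le_rpow_neg hc hlb
    _ = _ := by
        rw [ENNReal.mul_rpow_of_ne_top ofReal_ne_top
            (ENNReal.rpow_ne_top_of_nonneg hd ofReal_ne_top),
          ← ENNReal.rpow_mul, ENNReal.ofReal_rpow_of_pos hC, mul_neg]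

end MeasureDensityCondition

variable [BorelSpace E]

lemma aemeasurable_gagliardoKernel (hf : AEStronglyMeasurable f μ) (x : E) :
    AEMeasurable (gagliardoKernel d s f x) μ := by
  have := hf.aemeasurable
  unfold gagliardoKernel
  fun_prop

lemma enorm_mul_measure_inter_ball_le (hΩ : MeasurableSet Ω)
    (hf : AEStronglyMeasurable f (μ.restrict Ω)) (hds : 0 ≤ d + 2 * s) (hp : 1 ≤ p)
    (x : E) (r : ℝ) :
    ‖f x‖ₑ * μ (Ω ∩ Metric.ball x r) ≤
      (ENNReal.ofReal r ^ (d + 2 * s) * ∫⁻ y in Ω, gagliardoKernel d s f x y ∂μ) ^ (1 / 2 : ℝ) *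
          μ (Ω ∩ Metric.ball x r) ^ (1 / 2 : ℝ) +
        eLpNorm' f p (μ.restrict Ω) * μ (Ω ∩ Metric.ball x r) ^ (1 - 1 / p) := by
  set S := Ω ∩ Metric.ball x r
  have hS : MeasurableSet S := hΩ.inter Metric.isOpen_ball.measurableSet
  have hfS : AEStronglyMeasurable f (μ.restrict S) :=
    hf.mono_measure (Measure.restrict_mono Set.inter_subset_left le_rfl)
  have hdiff : ∫⁻ y in S, ‖f x - f y‖ₑ ^ (2 : ℝ) ∂μ ≤
      ENNReal.ofReal r ^ (d + 2 * s) * ∫⁻ y in Ω, gagliardoKernel d s f x y ∂μ := by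
    calc ∫⁻ y in S, ‖f x - f y‖ₑ ^ (2 : ℝ) ∂μ
        ≤ ∫⁻ y in S, gagliardoKernel d s f x y * ENNReal.ofReal r ^ (d + 2 * s) ∂μ :=
          setLIntegral_mono' hS fun y hy => enorm_sub_rpow_two_le_gagliardoKernel_mul
            (by simpa [dist_eq_norm, norm_sub_rev] using (Metric.mem_ball.1 hy.2).le) hds
      _ ≤ ∫⁻ y in Ω, gagliardoKernel d s f x y * ENNReal.ofReal r ^ (d + 2 * s) ∂μ :=
          lintegral_mono_set Set.inter_subset_left
      _ = _ := by
          rw [lintegral_mul_const'' _ (aemeasurable_gagliardoKernel hf x), mul_comm]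
  calc ‖f x‖ₑ * μ S ≤ ∫⁻ y in S, ‖f x - f y‖ₑ ∂μ + ∫⁻ y in S, ‖f y‖ₑ ∂μ :=
        enorm_mul_measure_le_setLIntegral hfS x
    _ ≤ _ := by
        gcongr
        · refine (setLIntegral_le_rpow_mul_measure_rpow (by fun_prop) one_le_two).trans ?_
          rw [show (1 : ℝ) - 1 / 2 = 1 / 2 by norm_num]
          gcongr
        · refine (setLIntegral_le_rpow_mul_measure_rpow hfS.enorm hp).trans ?_
          rw [eLpNorm'_eq_lintegral_enorm]
          gcongr
          exact Set.inter_subset_left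

lemma sobolev_exponent_identities {d s p : ℝ} (hs : 0 < s) (hsd : 2 * s < d)
    (hp : p = 2 * d / (d - 2 * s)) :
    s / (s + d / p) * p = p - 2 ∧ 1 / 2 * (d / p / (s + d / p)) * p = 1 := by
  have hd : 0 < d := by linarith
  have hp' : p * (d - 2 * s) = 2 * d := by rw [hp]; field_simp [(by linarith : d - 2 * s ≠ 0)]
  have hp0 : p ≠ 0 := by rintro rfl; linarith
  have hdp : s + d / p = d / 2 := by field_simp; linear_combination -hp'
  rw [hdp]
  constructor
  · field_simp; linear_combination -hp'
  · field_simp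

namespace MeasureDensityCondition

lemma enorm_le [ProperSpace E] [IsFiniteMeasureOnCompacts μ]
    (hdens : MeasureDensityCondition μ Ω C d) (hΩ : MeasurableSet Ω) (hC : 0 < C) (hd : 0 ≤ d)
    (hs : 0 ≤ s) (hp : 1 ≤ p) (hf : AEStronglyMeasurable f (μ.restrict Ω)) {x : E} (hx : x ∈ Ω)
    {r : ℝ} (hr : 0 < r) :
    ‖f x‖ₑ ≤ ENNReal.ofReal (C ^ (-(1 / 2 : ℝ))) * ENNReal.ofReal r ^ s *
          (∫⁻ y in Ω, gagliardoKernel d s f x y ∂μ) ^ (1 / 2 : ℝ) +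
        ENNReal.ofReal (C ^ (-(1 / p))) * ENNReal.ofReal r ^ (-(d / p)) *
          eLpNorm' f p (μ.restrict Ω) := by
  set m := μ (Ω ∩ Metric.ball x r)
  set t := ENNReal.ofReal r
  set G := ∫⁻ y in Ω, gagliardoKernel d s f x y ∂μ
  set A := eLpNorm' f p (μ.restrict Ω)
  have hm : m ≠ 0 := hdens.measure_inter_ball_ne_zero hC hx hr
  have hm' : m ≠ ⊤ := ((measure_mono Set.inter_subset_right).trans_lt measure_ball_lt_top).ne
  have hdiv : ‖f x‖ₑ ≤ (t ^ (d + 2 * s) * G) ^ (1 / 2 : ℝ) * m ^ (-(1 / 2 : ℝ)) +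
      A * m ^ (-(1 / p)) := by
    calc ‖f x‖ₑ = ‖f x‖ₑ * m * m⁻¹ := by rw [mul_assoc, ENNReal.mul_inv_cancel hm hm', mul_one]
      _ ≤ ((t ^ (d + 2 * s) * G) ^ (1 / 2 : ℝ) * m ^ (1 / 2 : ℝ) + A * m ^ (1 - 1 / p)) * m⁻¹ := by
        gcongr
        exact enorm_mul_measure_inter_ball_le hΩ hf (by positivity) hp x r
      _ = _ := by
        rw [add_mul, mul_assoc, mul_assoc, ENNReal.rpow_mul_inv hm hm',
          ENNReal.rpow_mul_inv hm hm']
        ring_nf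
  refine hdiv.trans (add_le_add ?_ ?_)
  · have hts : t ^ ((d + 2 * s) * (1 / 2)) * t ^ (-(d * (1 / 2))) = t ^ s := by
      rw [← ENNReal.rpow_add _ _ (by simpa [t] using hr) ofReal_ne_top]
      congr 1
      ring
    calc (t ^ (d + 2 * s) * G) ^ (1 / 2 : ℝ) * m ^ (-(1 / 2 : ℝ))
        ≤ (t ^ (d + 2 * s) * G) ^ (1 / 2 : ℝ) *
            (ENNReal.ofReal (C ^ (-(1 / 2 : ℝ))) * t ^ (-(d * (1 / 2)))) := by
          gcongr
          exact hdens.measure_inter_ball_rpow_neg_le hC hd hx hr (by norm_num)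
      _ = _ := by
          rw [ENNReal.mul_rpow_of_nonneg _ _ (by norm_num), ← ENNReal.rpow_mul, ← hts]
          ring
  · calc A * m ^ (-(1 / p)) ≤ A * (ENNReal.ofReal (C ^ (-(1 / p))) * t ^ (-(d * (1 / p)))) := by
          gcongr
          exact hdens.measure_inter_ball_rpow_neg_le hC hd hx hr (by positivity)
      _ = _ := by rw [mul_one_div]; ring

lemma enorm_rpow_le [ProperSpace E] [IsFiniteMeasureOnCompacts μ]
    (hdens : MeasureDensityCondition μ Ω C d) (hΩ : MeasurableSet Ω) (hC : 0 < C)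
    (hs : 0 < s) (hsd : 2 * s < d) (hp : p = 2 * d / (d - 2 * s))
    (hf : AEStronglyMeasurable f (μ.restrict Ω)) (hA : eLpNorm' f p (μ.restrict Ω) ≠ 0)
    (hA' : eLpNorm' f p (μ.restrict Ω) ≠ ⊤) {x : E} (hx : x ∈ Ω) :
    ‖f x‖ₑ ^ p ≤ ENNReal.ofReal (C ^ (-(1 / 2 : ℝ)) + C ^ (-(1 / p))) ^ p *
      eLpNorm' f p (μ.restrict Ω) ^ (p - 2) * ∫⁻ y in Ω, gagliardoKernel d s f x y ∂μ := by
  set A := eLpNorm' f p (μ.restrict Ω)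
  set G := ∫⁻ y in Ω, gagliardoKernel d s f x y ∂μ
  have hd : 0 < d := by linarith
  have hp2 : 2 < p := by rw [hp, lt_div_iff₀ (by linarith)]; linarith
  set K := ENNReal.ofReal (C ^ (-(1 / 2 : ℝ)) + C ^ (-(1 / p)))
  rcases eq_or_ne G ⊤ with hG | hG
  · rw [hG, ENNReal.mul_top (by positivity)]
    exact le_top
  have hopt := ENNReal.le_mul_rpow_mul_rpow_of_forall_le_add
    (c₁ := ENNReal.ofReal (C ^ (-(1 / 2 : ℝ)))) (c₂ := ENNReal.ofReal (C ^ (-(1 / p))))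
    (G := G ^ (1 / 2 : ℝ)) hs (by positivity : 0 < d / p) ofReal_ne_top hA hA'
    (ENNReal.rpow_ne_top_of_nonneg (by norm_num) hG) fun t ht ht' => by
      simpa [ENNReal.ofReal_toReal ht'] using
        hdens.enorm_le hΩ hC hd.le hs.le (by linarith) hf hx (ENNReal.toReal_pos ht ht')
  rw [← ENNReal.ofReal_add (by positivity) (by positivity)] at hopt
  obtain ⟨h₁, h₂⟩ := sobolev_exponent_identities hs hsd hp
  calc ‖f x‖ₑ ^ p
      ≤ (K * (A ^ (s / (s + d / p)) * (G ^ (1 / 2 : ℝ)) ^ (d / p / (s + d / p)))) ^ p :=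
        ENNReal.rpow_le_rpow hopt (by linarith)
    _ = K ^ p * A ^ (p - 2) * G := by
        simp only [ENNReal.mul_rpow_of_nonneg _ _ (by linarith : 0 ≤ p), ← ENNReal.rpow_mul]
        rw [h₁, h₂, ENNReal.rpow_one, mul_assoc]

lemma eLpNorm'_le_of_ne_top [ProperSpace E] [IsFiniteMeasureOnCompacts μ]
    (hdens : MeasureDensityCondition μ Ω C d) (hΩ : MeasurableSet Ω) (hC : 0 < C)
    (hs : 0 < s) (hsd : 2 * s < d) (hp : p = 2 * d / (d - 2 * s))
    (hf : AEStronglyMeasurable f (μ.restrict Ω)) (hfin : eLpNorm' f p (μ.restrict Ω) ≠ ⊤) :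
    eLpNorm' f p (μ.restrict Ω) ≤
      ENNReal.ofReal ((C ^ (-(1 / 2 : ℝ)) + C ^ (-(1 / p))) ^ (p / 2)) *
        (∫⁻ x in Ω, ∫⁻ y in Ω, gagliardoKernel d s f x y ∂μ ∂μ) ^ (1 / 2 : ℝ) := by
  set A := eLpNorm' f p (μ.restrict Ω)
  set D := ∫⁻ x in Ω, ∫⁻ y in Ω, gagliardoKernel d s f x y ∂μ ∂μ
  set K := ENNReal.ofReal (C ^ (-(1 / 2 : ℝ)) + C ^ (-(1 / p)))
  have hp2 : 2 < p := by rw [hp, lt_div_iff₀ (by linarith)]; linarith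
  rcases eq_or_ne A 0 with hA | hA
  · rw [hA]
    exact zero_le
  have hKA : K ^ p * A ^ (p - 2) ≠ ⊤ :=
    mul_ne_top (ENNReal.rpow_ne_top_of_nonneg (by linarith) ofReal_ne_top)
      (ENNReal.rpow_ne_top_of_nonneg (by linarith) hfin)
  have hApow : A ^ (2 : ℝ) * A ^ (p - 2) = ∫⁻ x in Ω, ‖f x‖ₑ ^ p ∂μ := by
    rw [← ENNReal.rpow_add _ _ hA hfin, add_sub_cancel]
    simp only [A, eLpNorm'_eq_lintegral_enorm]
    rw [← ENNReal.rpow_mul, one_div_mul_cancel (by linarith), ENNReal.rpow_one]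
  have hint : A ^ (2 : ℝ) * A ^ (p - 2) ≤ K ^ p * D * A ^ (p - 2) := by
    calc A ^ (2 : ℝ) * A ^ (p - 2) = ∫⁻ x in Ω, ‖f x‖ₑ ^ p ∂μ := hApow
      _ ≤ ∫⁻ x in Ω, K ^ p * A ^ (p - 2) * ∫⁻ y in Ω, gagliardoKernel d s f x y ∂μ ∂μ :=
        setLIntegral_mono' hΩ fun x hx => hdens.enorm_rpow_le hΩ hC hs hsd hp hf hA hfin hx
      _ = K ^ p * D * A ^ (p - 2) := by rw [lintegral_const_mul' _ _ hKA]; ring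
  have hsq : A ^ (2 : ℝ) ≤ K ^ p * D :=
    (ENNReal.mul_le_mul_iff_left (by positivity)
      (ENNReal.rpow_ne_top_of_nonneg (by linarith) hfin)).1 hint
  calc A = (A ^ (2 : ℝ)) ^ (1 / 2 : ℝ) := by rw [← ENNReal.rpow_mul]; norm_num
    _ ≤ (K ^ p * D) ^ (1 / 2 : ℝ) := by gcongr
    _ = _ := by
      rw [ENNReal.mul_rpow_of_nonneg _ _ (by norm_num), ← ENNReal.rpow_mul,
        ENNReal.ofReal_rpow_of_nonneg (by positivity) (by linarith)]
      ring_nf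

lemma eLpNorm_le_of_memLp [ProperSpace E] [IsFiniteMeasureOnCompacts μ]
    (hdens : MeasureDensityCondition μ Ω C d) (hΩ : MeasurableSet Ω) (hC : 0 < C)
    (hs : 0 < s) (hsd : 2 * s < d) (hp : p = 2 * d / (d - 2 * s))
    (hf : MemLp f 2 (μ.restrict Ω)) :
    eLpNorm f (ENNReal.ofReal p) (μ.restrict Ω) ≤
      ENNReal.ofReal ((C ^ (-(1 / 2 : ℝ)) + C ^ (-(1 / p))) ^ (p / 2)) *
        (∫⁻ x in Ω, ∫⁻ y in Ω, gagliardoKernel d s f x y ∂μ ∂μ) ^ (1 / 2 : ℝ) := by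
  have hp2 : 2 < p := by rw [hp, lt_div_iff₀ (by linarith)]; linarith
  set trunc : ℕ → E → ℝ := fun k x => min |f x| k
  have htrunc_meas : ∀ k, AEStronglyMeasurable (trunc k) (μ.restrict Ω) := fun k =>
    (hf.1.aemeasurable.abs.min aemeasurable_const).aestronglyMeasurable
  have hlim : ∀ x, Tendsto (trunc · x) atTop (𝓝 |f x|) := fun x =>
    tendsto_atTop_of_eventually_const fun k (hk : ⌈|f x|⌉₊ ≤ k) =>
      min_eq_left ((Nat.le_ceil _).trans (Nat.cast_le.2 hk))
  have hpe : ENNReal.ofReal p ≠ 0 := by simp; linarith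
  calc eLpNorm f (ENNReal.ofReal p) (μ.restrict Ω)
      = eLpNorm (fun x => |f x|) (ENNReal.ofReal p) (μ.restrict Ω) := by
        simpa using (eLpNorm_norm f).symm
    _ ≤ atTop.liminf fun k => eLpNorm (trunc k) (ENNReal.ofReal p) (μ.restrict Ω) :=
        Lp.eLpNorm_lim_le_liminf_eLpNorm htrunc_meas _ (ae_of_all _ hlim)
    _ ≤ _ := by
        refine liminf_le_of_frequently_le' (Frequently.of_forall fun k => ?_)
        rw [eLpNorm_eq_eLpNorm' hpe ofReal_ne_top, ENNReal.toReal_ofReal (by linarith)]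
        refine (hdens.eLpNorm'_le_of_ne_top hΩ hC hs hsd hp (htrunc_meas k)
          (eLpNorm'_min_abs_ne_top hf k.cast_nonneg hp2.le)).trans ?_
        gcongr with x y
        exact gagliardoKernel_le_of_abs_sub_le (fun x y => abs_min_abs_sub_min_abs_le _ _ _) x y

end MeasureDensityCondition

/-- Fractional Sobolev inequality for domains satisfying the measure density condition. -/
theorem sobolev_measure_density_domain (N : ℕ)
    (Ω : Set (EuclideanSpace ℝ (Fin N))) (hΩopen : IsOpen Ω)
    (CΩ : ℝ) (hCΩ : 0 < CΩ)
    (hdensity : ∀ x ∈ Ω, ∀ ρ : ℝ, 0 < ρ →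
      ENNReal.ofReal (CΩ * ρ ^ N) ≤ volume (Ω ∩ Metric.ball x ρ))
    (s : ℝ) (hs : s ∈ Set.Ioo (0 : ℝ) 1) (hsN : 2 * s < N) :
    ∃ C : ℝ, 0 < C ∧ ∀ f : EuclideanSpace ℝ (Fin N) → ℝ,
      MemLp f 2 (volume.restrict Ω) →
      gagliardoSq s Ω f ≠ ⊤ →
      eLpNorm f (ENNReal.ofReal (2 * N / ((N : ℝ) - 2 * s))) (volume.restrict Ω) ≤
        ENNReal.ofReal C * gagliardoSq s Ω f ^ (1 / 2 : ℝ) := by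
  have hdens : MeasureDensityCondition volume Ω CΩ N := fun x hx ρ hρ => by
    simpa [Real.rpow_natCast] using hdensity x hx ρ hρ
  set p : ℝ := 2 * N / ((N : ℝ) - 2 * s) with hp
  refine ⟨(CΩ ^ (-(1 / 2 : ℝ)) + CΩ ^ (-(1 / p))) ^ (p / 2), by positivity, fun f hf _ => ?_⟩
  rw [gagliardoSq_eq_lintegral_gagliardoKernel]
  exact hdens.eLpNorm_le_of_memLp hΩopen.measurableSet hCΩ hs.1 hsN hp hf
end

section
/- Let N ≥ 1, c ∈ (0,1), R > 0, and let Ω_s ⊂ ℝ^N be a nonempty open set with Ω_s ⊂ B_R(0), and let Ω_r = ℝ^N ∖ closure(Ω_s). Then there exist positive constants c₁ = c₁(R, N, c) and c₂ = c₂(R, N, c) such that for every u ∈ L²(ℝ^N), ∫_{Ω_s} ∫_{Ω_r} (u(x) − u(y))² / |x−y|^{N+2c} dy dx ≥ c₁ ‖u‖_{L²(Ω_s)}² − c₂ ‖u‖_{L²(Ω_r)}². -/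
open MeasureTheory ENNReal

/-!
Write `s = N + 2c`. Every point `y` of the ball `A` of radius `R/2` centred at a point of norm
`5R/2` lies in `Ωr` and satisfies `R ≤ |x - y| ≤ 4R` for `x ∈ Ωs`, so `a²/2 ≤ (a - b)² + b²` gives
`u(x)²/(2(4R)^s) ≤ (u(x) - u(y))²/|x - y|^s + u(y)²/R^s`. Averaging over `y ∈ A` and integrating
over `x ∈ Ωs` yields the claim with `c₁ = |A|/(2(4R)^s)` and `c₂ = |Ωs|/R^s`.
-/

theorem inv_two_mul_mul_sq_le {D₁ D D₂ : ℝ} (h₁ : 0 < D₁) (h : D₁ ≤ D) (h₂ : D ≤ D₂) (a b : ℝ) :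
    (2 * D₂)⁻¹ * a ^ 2 ≤ (a - b) ^ 2 / D + D₁⁻¹ * b ^ 2 := by
  have hD : 0 < D := h₁.trans_le h
  have hD₂ : 0 < D₂ := hD.trans_le h₂
  calc (2 * D₂)⁻¹ * a ^ 2 = (a ^ 2 / 2) / D₂ := by ring
    _ ≤ ((a - b) ^ 2 + b ^ 2) / D₂ := by
        gcongr
        nlinarith [sq_nonneg (a - 2 * b)]
    _ = (a - b) ^ 2 / D₂ + b ^ 2 / D₂ := add_div _ _ _
    _ ≤ (a - b) ^ 2 / D + D₁⁻¹ * b ^ 2 := by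
        rw [inv_mul_eq_div]
        gcongr
        exact h.trans h₂

theorem eLpNorm_two_rpow_two {α : Type*} [MeasurableSpace α] (μ : Measure α) (f : α → ℝ) :
    eLpNorm f 2 μ ^ (2 : ℝ) = ∫⁻ x, ENNReal.ofReal (f x ^ 2) ∂μ := by
  have := eLpNorm_nnreal_pow_eq_lintegral (f := f) (μ := μ) (p := 2) two_ne_zero
  simp only [ENNReal.coe_ofNat, NNReal.coe_ofNat] at this
  rw [this]
  refine lintegral_congr fun x => ?_
  rw [← sq_abs, ENNReal.ofReal_pow (abs_nonneg _), Real.enorm_eq_ofReal_abs, ← ENNReal.rpow_natCast]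
  norm_num

theorem measure_mul_mul_setLIntegral_le {α : Type*} [MeasurableSpace α] {μ : Measure α}
    {S A T : Set α} (hS : MeasurableSet S) (hA : MeasurableSet A) (hAT : A ⊆ T)
    {a b : ℝ≥0∞} (hb : b ≠ ∞) {φ : α → ℝ≥0∞} (hφ : AEMeasurable φ (μ.restrict A))
    {F : α → α → ℝ≥0∞} (hF : ∀ x ∈ S, ∀ y ∈ A, a * φ x ≤ F x y + b * φ y) :
    μ A * a * ∫⁻ x in S, φ x ∂μ ≤
      ∫⁻ x in S, ∫⁻ y in T, F x y ∂μ ∂μ + μ S * b * ∫⁻ y in T, φ y ∂μ := by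
  have hx : ∀ x ∈ S, μ A * a * φ x ≤ ∫⁻ y in T, F x y ∂μ + b * ∫⁻ y in T, φ y ∂μ := by
    intro x hxS
    calc μ A * a * φ x = ∫⁻ _ in A, a * φ x ∂μ := by rw [setLIntegral_const]; ring
      _ ≤ ∫⁻ y in A, (F x y + b * φ y) ∂μ := setLIntegral_mono' hA (hF x hxS)
      _ = ∫⁻ y in A, F x y ∂μ + b * ∫⁻ y in A, φ y ∂μ := by
        rw [lintegral_add_right' _ (hφ.const_mul b), lintegral_const_mul' _ _ hb]
      _ ≤ ∫⁻ y in T, F x y ∂μ + b * ∫⁻ y in T, φ y ∂μ := by gcongr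
  calc μ A * a * ∫⁻ x in S, φ x ∂μ ≤ ∫⁻ x in S, μ A * a * φ x ∂μ := lintegral_const_mul_le _ _
    _ ≤ ∫⁻ x in S, (∫⁻ y in T, F x y ∂μ + b * ∫⁻ y in T, φ y ∂μ) ∂μ := setLIntegral_mono' hS hx
    _ = _ := by rw [lintegral_add_right _ measurable_const, setLIntegral_const]; ring

theorem exists_ball_subset_compl_closure_of_subset_ball {E : Type*} [NormedAddCommGroup E]
    [NormedSpace ℝ E] [Nontrivial E] {R : ℝ} (hR : 0 < R) {Ω : Set E}
    (hΩ : Ω ⊆ Metric.ball 0 R) :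
    ∃ z : E, Metric.ball z (R / 2) ⊆ (closure Ω)ᶜ ∧
      ∀ x ∈ Ω, ∀ y ∈ Metric.ball z (R / 2), ‖x - y‖ ∈ Set.Icc R (4 * R) := by
  obtain ⟨z, hz⟩ := exists_norm_eq E (by positivity : 0 ≤ 5 * R / 2)
  have hy_norm : ∀ y ∈ Metric.ball z (R / 2), 2 * R < ‖y‖ ∧ ‖y‖ < 3 * R := fun y hy => by
    have hyz := mem_ball_iff_norm.1 hy
    constructor <;> linarith [norm_le_norm_add_norm_sub' y z, norm_le_norm_add_norm_sub' z y,
      norm_sub_rev z y]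
  refine ⟨z, fun y hy hyΩ => ?_, fun x hx y hy => ?_⟩
  · have := (closure_mono hΩ).trans Metric.closure_ball_subset_closedBall hyΩ
    linarith [mem_closedBall_zero_iff.1 this, hy_norm y hy]
  · have hx' := mem_ball_zero_iff.1 (hΩ hx)
    have hy' := hy_norm y hy
    constructor <;> linarith [norm_sub_le x y, norm_le_norm_add_norm_sub' y x, norm_sub_rev y x]

/-- The coupling (cross) term controls the `L²` norm on the bounded component from below,
up to the `L²` norm on the exterior component. -/
theorem cross_term_lower_bound (N : ℕ) (hN : 1 ≤ N) (c R : ℝ)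
    (hc : c ∈ Set.Ioo (0 : ℝ) 1) (hR : 0 < R)
    (Ωs : Set (EuclideanSpace ℝ (Fin N))) (hne : Ωs.Nonempty) (hΩs : IsOpen Ωs)
    (hsub : Ωs ⊆ Metric.ball 0 R) :
    ∃ c₁ c₂ : ℝ, 0 < c₁ ∧ 0 < c₂ ∧
      ∀ u : EuclideanSpace ℝ (Fin N) → ℝ, MemLp u 2 volume →
        ENNReal.ofReal c₁ * eLpNorm u 2 (volume.restrict Ωs) ^ (2 : ℝ) ≤
          (∫⁻ x in Ωs, ∫⁻ y in (closure Ωs)ᶜ,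
              ENNReal.ofReal ((u x - u y) ^ 2 / ‖x - y‖ ^ ((N : ℝ) + 2 * c))) +
            ENNReal.ofReal c₂ * eLpNorm u 2 (volume.restrict (closure Ωs)ᶜ) ^ (2 : ℝ) := by
  have hp : 0 ≤ (N : ℝ) + 2 * c := by linarith [hc.1, (N.cast_nonneg : (0 : ℝ) ≤ N)]
  have : NeZero N := ⟨by omega⟩
  obtain ⟨z, hAΩr, hdist⟩ := exists_ball_subset_compl_closure_of_subset_ball hR hsub
  set A := Metric.ball z (R / 2)
  have hA : 0 < volume A := Metric.measure_ball_pos _ _ (by positivity)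
  have hA_fin : volume A ≠ ∞ := measure_ball_lt_top.ne
  have hΩ : 0 < volume Ωs := hΩs.measure_pos volume hne
  have hΩ_fin : volume Ωs ≠ ∞ := (measure_mono hsub |>.trans_lt measure_ball_lt_top).ne
  refine ⟨(volume A).toReal * (2 * (4 * R) ^ ((N : ℝ) + 2 * c))⁻¹,
    (volume Ωs).toReal * (R ^ ((N : ℝ) + 2 * c))⁻¹,
    mul_pos (toReal_pos hA.ne' hA_fin) (by positivity),
    mul_pos (toReal_pos hΩ.ne' hΩ_fin) (by positivity), fun u hu => ?_⟩
  rw [eLpNorm_two_rpow_two, eLpNorm_two_rpow_two, ofReal_mul toReal_nonneg, ofReal_toReal hA_fin,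
    ofReal_mul toReal_nonneg, ofReal_toReal hΩ_fin]
  refine measure_mul_mul_setLIntegral_le hΩs.measurableSet measurableSet_ball hAΩr ofReal_ne_top
    (hu.aestronglyMeasurable.aemeasurable.pow_const 2).ennreal_ofReal.restrict fun x hx y hy => ?_
  obtain ⟨h₁, h₂⟩ := hdist x hx y hy
  rw [← ofReal_mul (by positivity), ← ofReal_mul (by positivity),
    ← ofReal_add (by positivity) (by positivity)]
  exact ofReal_le_ofReal <| inv_two_mul_mul_sq_le (by positivity)
    (Real.rpow_le_rpow hR.le h₁ hp) (Real.rpow_le_rpow (norm_nonneg _) h₂ hp) _ _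
end
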